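/- arXiv:1702.06635 — 5 statements merged into one kernel-verified Lean document; each statement's English description precedes it below -/
import Mathlib

section
/- Let j ≥ 0 and k ≥ 0 be integers. Then E[(y − μ)^{2j} s(y)^k] = V^{kα} (kα + 1)^{−j−1/2} (2j − 1)!! σ^{2j}, where (2j−1)!! denotes the double factorial (the product of the odd numbers up to 2j−1, with (−1)!! = 1) and the expectation is with respect to y ~ N(μ, σ²). -/
open MeasureTheory Real Filter

/-- Pointwise bound: `x^(2n) * exp (-b*x^2) ≤ C * exp (-(b/2)*x^2)`. -/
lemma pow_mul_exp_bound {b : ℝ} (hb : 0 < b) (n : ℕ) (x : ℝ) :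
    x ^ (2 * n) * Real.exp (-b * x ^ 2)
      ≤ (n.factorial * (2 / b) ^ n) * Real.exp (-(b / 2) * x ^ 2) := by
  have h1 : ((b / 2) * x ^ 2) ^ n / n.factorial ≤ Real.exp ((b / 2) * x ^ 2) :=
    Real.pow_div_factorial_le_exp (x := (b/2)*x^2) (by positivity) n
  have hx2n : x ^ (2 * n) = (x ^ 2) ^ n := by rw [pow_mul]
  have h2 : x ^ (2 * n) ≤ n.factorial * (2 / b) ^ n * Real.exp ((b / 2) * x ^ 2) := by
    rw [hx2n]
    have := (div_le_iff₀ (by positivity : (0:ℝ) < (n.factorial : ℝ))).mp h1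
    calc (x ^ 2) ^ n = (n.factorial * (2 / b) ^ n) * (((b/2) * x ^ 2) ^ n / n.factorial) := by
          rw [mul_pow]
          field_simp
          rw [mul_assoc, ← mul_pow, show (2 / b) * (b / 2) = 1 by field_simp, one_pow, mul_one]
      _ ≤ (n.factorial * (2 / b) ^ n) * Real.exp ((b / 2) * x ^ 2) := by
          apply mul_le_mul_of_nonneg_left h1 (by positivity)
  calc x ^ (2 * n) * Real.exp (-b * x ^ 2)
      ≤ (n.factorial * (2 / b) ^ n * Real.exp ((b / 2) * x ^ 2)) * Real.exp (-b * x ^ 2) :=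
        mul_le_mul_of_nonneg_right h2 (Real.exp_pos _).le
    _ = (n.factorial * (2 / b) ^ n) * Real.exp (-(b / 2) * x ^ 2) := by
        rw [mul_assoc, ← Real.exp_add]; ring_nf

lemma integrable_even_pow_mul_exp {b : ℝ} (hb : 0 < b) (n : ℕ) :
    Integrable (fun x : ℝ => x ^ (2 * n) * Real.exp (-b * x ^ 2)) := by
  apply Integrable.mono' ((integrable_exp_neg_mul_sq (by positivity : 0 < b / 2)).const_mul
    (n.factorial * (2 / b) ^ n))
  · exact ((measurable_id.pow_const _).mul
      ((measurable_id.pow_const 2).const_mul (-b)).exp).aestronglyMeasurable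
  · filter_upwards with x
    have h0 : 0 ≤ x ^ (2 * n) * Real.exp (-b * x ^ 2) := by
      rw [pow_mul]; positivity
    rw [Real.norm_eq_abs, abs_of_nonneg h0]
    exact pow_mul_exp_bound hb n x

lemma tendsto_pow_mul_exp_atTop {b : ℝ} (hb : 0 < b) (m : ℕ) :
    Tendsto (fun x : ℝ => x ^ m * Real.exp (-b * x ^ 2)) atTop (nhds 0) := by
  have hbound : ∀ᶠ x in atTop, x ^ m * Real.exp (-b * x ^ 2)
      ≤ (m.factorial * (2 / b) ^ m) * Real.exp (-(b / 2) * x ^ 2) := by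
    filter_upwards [eventually_ge_atTop (1 : ℝ)] with x hx
    have h1 : x ^ m ≤ x ^ (2 * m) := pow_le_pow_right₀ hx (by omega)
    calc x ^ m * Real.exp (-b * x ^ 2)
        ≤ x ^ (2 * m) * Real.exp (-b * x ^ 2) :=
          mul_le_mul_of_nonneg_right h1 (Real.exp_pos _).le
      _ ≤ _ := pow_mul_exp_bound hb m x
  have hlow : ∀ᶠ x in atTop, (0:ℝ) ≤ x ^ m * Real.exp (-b * x ^ 2) := by
    filter_upwards [eventually_ge_atTop (0 : ℝ)] with x hx; positivity
  have hto : Tendsto (fun x : ℝ => (m.factorial * (2 / b) ^ m) * Real.exp (-(b / 2) * x ^ 2))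
      atTop (nhds ((m.factorial * (2 / b) ^ m) * 0)) := by
    apply Tendsto.const_mul
    apply Real.tendsto_exp_atBot.comp
    exact (tendsto_pow_atTop two_ne_zero).const_mul_atTop_of_neg (by linarith)
  rw [mul_zero] at hto
  exact tendsto_of_tendsto_of_tendsto_of_le_of_le' tendsto_const_nhds hto hlow hbound

/-- Even Gaussian moments. -/
lemma gaussian_even_moment {b : ℝ} (hb : 0 < b) (n : ℕ) :
    ∫ x : ℝ, x ^ (2 * n) * Real.exp (-b * x ^ 2)
      = (Nat.doubleFactorial (2 * n - 1) : ℝ) / (2 * b) ^ n * Real.sqrt (π / b) := by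
  induction n with
  | zero => simpa using integral_gaussian b
  | succ n ih =>
    -- integration by parts: F x = x^(2n+1) exp(-b x^2)
    set F : ℝ → ℝ := fun x => x ^ (2 * n + 1) * Real.exp (-b * x ^ 2) with hF
    set F' : ℝ → ℝ := fun x =>
      (2 * n + 1) * (x ^ (2 * n) * Real.exp (-b * x ^ 2))
        - 2 * b * (x ^ (2 * (n + 1)) * Real.exp (-b * x ^ 2)) with hF'
    have hderiv : ∀ x : ℝ, HasDerivAt F (F' x) x := by
      intro x
      have h1 : HasDerivAt (fun x : ℝ => x ^ (2 * n + 1)) ((2 * n + 1) * x ^ (2 * n)) x := by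
        simpa using hasDerivAt_pow (2 * n + 1) x
      have h2 : HasDerivAt (fun x : ℝ => Real.exp (-b * x ^ 2))
          (Real.exp (-b * x ^ 2) * (-b * (2 * x))) x := by
        exact (((hasDerivAt_pow 2 x).const_mul (-b)).exp).congr_deriv (by ring)
      have := h1.mul h2
      apply this.congr_deriv
      simp only [hF']
      ring
    have hint : Integrable F' :=
      (((integrable_even_pow_mul_exp hb n).const_mul _)).sub
        (((integrable_even_pow_mul_exp hb (n + 1)).const_mul _))
    have htop : Tendsto F atTop (nhds 0) := tendsto_pow_mul_exp_atTop hb (2 * n + 1)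
    have hbot : Tendsto F atBot (nhds 0) := by
      have hneg : Tendsto (fun x : ℝ => -x) atBot atTop := tendsto_neg_atBot_atTop
      have hcomp : Tendsto (fun x : ℝ => F (-x)) atTop (nhds 0) := by
        have : (fun x : ℝ => F (-x)) = fun x => -(x ^ (2 * n + 1) * Real.exp (-b * x ^ 2)) := by
          funext x; simp only [hF]
          rw [show (-x) ^ (2 * n + 1) = -(x ^ (2 * n + 1)) by
            rw [neg_pow]; simp [pow_succ]]
          ring_nf
        rw [this]
        have := htop.neg
        simp only [neg_zero] at this
        exact this.congr (fun x => by simp [hF])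
      have := hcomp.comp hneg
      simp only [Function.comp_def, neg_neg] at this
      exact this
    have hzero : ∫ x : ℝ, F' x = 0 := by
      rw [MeasureTheory.integral_of_hasDerivAt_of_tendsto hderiv hint hbot htop]
      simp
    have hsplit : ∫ x : ℝ, F' x
        = (2 * n + 1) * (∫ x : ℝ, x ^ (2 * n) * Real.exp (-b * x ^ 2))
          - 2 * b * (∫ x : ℝ, x ^ (2 * (n + 1)) * Real.exp (-b * x ^ 2)) := by
      rw [integral_sub (((integrable_even_pow_mul_exp hb n).const_mul _))
        (((integrable_even_pow_mul_exp hb (n + 1)).const_mul _)),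
        integral_const_mul, integral_const_mul]
    have hrec : 2 * b * (∫ x : ℝ, x ^ (2 * (n + 1)) * Real.exp (-b * x ^ 2))
        = (2 * n + 1) * (∫ x : ℝ, x ^ (2 * n) * Real.exp (-b * x ^ 2)) := by
      rw [hsplit] at hzero; linarith
    have hdf : (Nat.doubleFactorial (2 * (n + 1) - 1) : ℝ)
        = (2 * n + 1) * (Nat.doubleFactorial (2 * n - 1) : ℝ) := by
      cases n with
      | zero => simp [Nat.doubleFactorial]
      | succ m =>
        have h1 : 2 * (m + 1 + 1) - 1 = (2 * (m + 1) - 1) + 2 := by omega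
        rw [h1, Nat.doubleFactorial_add_two]
        push_cast
        have h2 : ((2 * (m + 1) - 1 : ℕ) : ℝ) = 2 * (m + 1) - 1 := by
          push_cast [Nat.cast_sub (by omega : 1 ≤ 2 * (m + 1))]; ring
        rw [h2]; ring
    have h2b : (0:ℝ) < 2 * b := by linarith
    have : ∫ x : ℝ, x ^ (2 * (n + 1)) * Real.exp (-b * x ^ 2)
        = (2 * n + 1) / (2 * b) * (∫ x : ℝ, x ^ (2 * n) * Real.exp (-b * x ^ 2)) := by
      rw [div_mul_eq_mul_div, eq_div_iff (ne_of_gt h2b)]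
      linear_combination hrec
    rw [this, ih, hdf]
    rw [pow_succ]
    field_simp

/-- Lemma 1 (even moments): for `y ~ N(μ, σ²)`,
`E[(y − μ)^{2j} s(y)^k] = V^{kα} (kα+1)^{−j−1/2} (2j−1)!! σ^{2j}`
for integers `j ≥ 0`, `k ≥ 0`, where `s(y) = V^α exp(−α(y−μ)²/(2σ²))`,
`V = (2πσ²)^{−1/2}` and `(2j−1)!!` is the double factorial (with `(−1)!! = 1`). -/
theorem even_moment_formula
    (μ σ2 α : ℝ) (hσ2 : 0 < σ2) (hα : 0 < α)
    (V : ℝ) (hV : V = (2 * π * σ2) ^ (-(1/2) : ℝ))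
    (f s : ℝ → ℝ)
    (hf : ∀ y, f y = V * Real.exp (-(y - μ) ^ 2 / (2 * σ2)))
    (hs : ∀ y, s y = V ^ α * Real.exp (-α * (y - μ) ^ 2 / (2 * σ2)))
    (j k : ℕ) :
    ∫ y : ℝ, f y * ((y - μ) ^ (2 * j) * s y ^ k)
      = V ^ ((k : ℝ) * α) * ((k : ℝ) * α + 1) ^ (-(j : ℝ) - 1/2)
        * (Nat.doubleFactorial (2 * j - 1) : ℝ) * σ2 ^ j := by
  have h2πσ : (0:ℝ) < 2 * π * σ2 := by positivity
  have hVpos : 0 < V := by rw [hV]; positivity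
  set c : ℝ := (k : ℝ) * α + 1 with hc
  have hcpos : (0:ℝ) < c := by positivity
  set b : ℝ := c / (2 * σ2) with hb
  have hbpos : 0 < b := by positivity
  -- rewrite integrand
  have hintegrand : ∀ y : ℝ, f y * ((y - μ) ^ (2 * j) * s y ^ k)
      = (V * V ^ ((k : ℝ) * α)) * ((y - μ) ^ (2 * j) * Real.exp (-b * (y - μ) ^ 2)) := by
    intro y
    rw [hf, hs]
    rw [mul_pow, ← Real.exp_nat_mul, ← Real.rpow_natCast (V ^ α) k, ← Real.rpow_mul hVpos.le]
    rw [mul_comm (α) (k:ℝ)]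
    have hexp : Real.exp (-(y - μ) ^ 2 / (2 * σ2)) * Real.exp ((k:ℝ) * (-α * (y - μ) ^ 2 / (2 * σ2)))
        = Real.exp (-b * (y - μ) ^ 2) := by
      rw [← Real.exp_add]
      congr 1
      rw [hb, hc]
      field_simp
      ring
    calc V * Real.exp (-(y - μ) ^ 2 / (2 * σ2)) *
          ((y - μ) ^ (2 * j) * (V ^ ((k:ℝ) * α) * Real.exp ((k:ℝ) * (-α * (y - μ) ^ 2 / (2 * σ2)))))
        = (V * V ^ ((k:ℝ) * α)) * ((y - μ) ^ (2 * j) *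
            (Real.exp (-(y - μ) ^ 2 / (2 * σ2)) * Real.exp ((k:ℝ) * (-α * (y - μ) ^ 2 / (2 * σ2))))) := by
          ring
      _ = _ := by rw [hexp]
  simp_rw [hintegrand]
  rw [integral_const_mul]
  have hshift : ∫ y : ℝ, (y - μ) ^ (2 * j) * Real.exp (-b * (y - μ) ^ 2)
      = ∫ x : ℝ, x ^ (2 * j) * Real.exp (-b * x ^ 2) := by
    exact integral_sub_right_eq_self (μ := volume) (fun x => x ^ (2 * j) * Real.exp (-b * x ^ 2)) μ
  rw [hshift, gaussian_even_moment hbpos j]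
  -- now algebra
  have hsqrt : Real.sqrt (π / b) = (2 * π * σ2) ^ ((1:ℝ)/2) * c ^ (-(1:ℝ)/2) := by
    rw [Real.sqrt_eq_rpow]
    have : π / b = (2 * π * σ2) * c⁻¹ := by
      rw [hb]; field_simp
    rw [this, Real.mul_rpow (by positivity) (by positivity),
      ← Real.rpow_neg_one c, ← Real.rpow_mul hcpos.le]
    norm_num
  have hVV : V * (2 * π * σ2) ^ ((1:ℝ)/2) = 1 := by
    rw [hV, ← Real.rpow_add h2πσ]
    norm_num
  have h2b : (2 * b) ^ j = c ^ j / σ2 ^ j := by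
    have h2bc : 2 * b = c / σ2 := by rw [hb]; field_simp
    rw [h2bc, div_pow]
  rw [h2b, hsqrt]
  have hcj : (c : ℝ) ^ (j : ℕ) = c ^ ((j : ℕ) : ℝ) := (Real.rpow_natCast c j).symm
  have hkey : c ^ (-(j:ℝ) - 1/2) = (c ^ (j:ℕ))⁻¹ * c ^ (-(1:ℝ)/2) := by
    rw [hcj, ← Real.rpow_neg hcpos.le, ← Real.rpow_add hcpos]
    congr 1
    ring
  rw [hkey]
  have hσ2j : σ2 ^ j ≠ 0 := by positivity
  have hcjne : (c:ℝ) ^ (j:ℕ) ≠ 0 := by positivity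
  have hdd : ((Nat.doubleFactorial (2 * j - 1) : ℝ)) / (c ^ j / σ2 ^ j)
      = (Nat.doubleFactorial (2 * j - 1) : ℝ) * σ2 ^ j / c ^ j := by
    field_simp
  rw [hdd]
  linear_combination (c ^ (-(1:ℝ)/2) * (Nat.doubleFactorial (2 * j - 1) : ℝ) * σ2 ^ j / c ^ j
    * V ^ ((k:ℝ) * α)) * hVV
end

section
/- Let A > 0, D > 0, B = A + D and V = (2πB)^{−1/2}, and define G(α) = (D²/B) { V^{2α}/(2α+1)^{3/2} − 2V^α/(α+1)^{3/2} + 1 } for α > 0. Then G is monotone increasing on (0, 1), i.e. 0 < α₁ ≤ α₂ < 1 implies G(α₁) ≤ G(α₂), and lim_{α→0⁺} G(α) = 0. -/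
open Real Filter Topology
open MeasureTheory


lemma gauss_moment {b : ℝ} (hb : 0 < b) :
    ∫ x : ℝ, x ^ 2 * Real.exp (-b * x ^ 2) = Real.sqrt (π / b) / (2 * b) := by
  have hbne : (2 : ℝ) * b ≠ 0 := by positivity
  have hu : ∀ x : ℝ, HasDerivAt (fun x : ℝ => x) 1 x := fun x => hasDerivAt_id x
  have hv : ∀ x : ℝ, HasDerivAt (fun x : ℝ => -Real.exp (-b * x ^ 2) / (2 * b))
      (x * Real.exp (-b * x ^ 2)) x := by
    intro x
    have h1 : HasDerivAt (fun x : ℝ => -b * x ^ 2) (-b * (2 * x ^ 1)) x :=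
      ((hasDerivAt_pow 2 x).const_mul (-b)).congr_deriv (by norm_num)
    have h2 := (h1.exp.neg).div_const (2 * b)
    refine h2.congr_deriv ?_
    field_simp
  have hx2 : Integrable (fun x : ℝ => x ^ 2 * Real.exp (-b * x ^ 2)) := by
    have h := integrable_rpow_mul_exp_neg_mul_sq hb (s := (2 : ℝ)) (by norm_num)
    have : (fun x : ℝ => x ^ (2 : ℝ) * Real.exp (-b * x ^ 2))
        = fun x : ℝ => x ^ 2 * Real.exp (-b * x ^ 2) := by
      funext x; rw [Real.rpow_two]
    rwa [this] at h
  have huv' : Integrable ((fun x : ℝ => x) * fun x => x * Real.exp (-b * x ^ 2)) := by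
    have := hx2
    refine this.congr ?_
    filter_upwards with x
    simp [Pi.mul_apply]; ring
  have hu'v : Integrable ((fun _ : ℝ => (1 : ℝ)) * fun x => -Real.exp (-b * x ^ 2) / (2 * b)) := by
    refine (((integrable_exp_neg_mul_sq hb).neg).div_const (2 * b)).congr ?_
    filter_upwards with x
    simp [Pi.mul_apply]
  have huv : Integrable ((fun x : ℝ => x) * fun x => -Real.exp (-b * x ^ 2) / (2 * b)) := by
    refine (((integrable_mul_exp_neg_mul_sq hb).neg).div_const (2 * b)).congr ?_
    filter_upwards with x
    simp [Pi.mul_apply]; ring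
  have key := integral_mul_deriv_eq_deriv_mul_of_integrable (fun x _ => hu x) (fun x _ => hv x) huv' hu'v huv
  calc ∫ x : ℝ, x ^ 2 * Real.exp (-b * x ^ 2)
      = ∫ x : ℝ, x * (x * Real.exp (-b * x ^ 2)) := by congr 1; funext x; ring
    _ = -∫ x : ℝ, (1 : ℝ) * (-Real.exp (-b * x ^ 2) / (2 * b)) := key
    _ = -∫ x : ℝ, (-(2 * b)⁻¹) * Real.exp (-b * x ^ 2) := by
        congr 1
        apply integral_congr_ae
        filter_upwards with x
        field_simp
    _ = (2 * b)⁻¹ * ∫ x : ℝ, Real.exp (-b * x ^ 2) := by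
        rw [integral_const_mul]; ring
    _ = Real.sqrt (π / b) / (2 * b) := by rw [integral_gaussian]; ring

lemma integrable_x2exp {c : ℝ} (hc : 0 < c) :
    Integrable (fun x : ℝ => x ^ 2 * Real.exp (-(c / 2) * x ^ 2)) := by
  have h := integrable_rpow_mul_exp_neg_mul_sq (b := c / 2) (by linarith) (s := (2 : ℝ)) (by norm_num)
  have : (fun x : ℝ => x ^ (2 : ℝ) * Real.exp (-(c / 2) * x ^ 2))
      = fun x : ℝ => x ^ 2 * Real.exp (-(c / 2) * x ^ 2) := by
    funext x; rw [Real.rpow_two]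
  rwa [this] at h

lemma gauss_moment2 {c : ℝ} (hc : 0 < c) :
    ∫ x : ℝ, x ^ 2 * Real.exp (-(c / 2) * x ^ 2) = Real.sqrt (2 * π) / c ^ ((3 : ℝ) / 2) := by
  rw [gauss_moment (by linarith : (0:ℝ) < c / 2)]
  have h1 : π / (c / 2) = 2 * π / c := by field_simp
  have h2 : Real.sqrt (2 * π / c) = Real.sqrt (2 * π) / Real.sqrt c := Real.sqrt_div (by positivity) c
  have h3 : c ^ ((3 : ℝ) / 2) = Real.sqrt c * c := by
    rw [show (3 : ℝ) / 2 = 1 / 2 + 1 by norm_num, Real.rpow_add hc, Real.rpow_one,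
      ← Real.sqrt_eq_rpow]
  rw [h1, h2, h3]
  have hs : Real.sqrt c ≠ 0 := ne_of_gt (Real.sqrt_pos.2 hc)
  field_simp

/-- Pointwise expansion of the squared difference. -/
lemma expand_pt (V : ℝ) (hV : 0 < V) (α x : ℝ) :
    x ^ 2 * (V ^ α * Real.exp (-(α / 2) * x ^ 2) - 1) ^ 2 * Real.exp (-(1 / 2 : ℝ) * x ^ 2)
      = V ^ (2 * α) * (x ^ 2 * Real.exp (-((2 * α + 1) / 2) * x ^ 2))
        - 2 * V ^ α * (x ^ 2 * Real.exp (-((α + 1) / 2) * x ^ 2))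
        + x ^ 2 * Real.exp (-((1 : ℝ) / 2) * x ^ 2) := by
  have e2 : Real.exp (-(α / 2) * x ^ 2) * Real.exp (-(1 / 2 : ℝ) * x ^ 2)
      = Real.exp (-((α + 1) / 2) * x ^ 2) := by rw [← Real.exp_add]; congr 1; ring
  have e3 : Real.exp (-(α / 2) * x ^ 2) * Real.exp (-((α + 1) / 2) * x ^ 2)
      = Real.exp (-((2 * α + 1) / 2) * x ^ 2) := by rw [← Real.exp_add]; congr 1; ring
  have ha : V ^ (2 * α) = V ^ α * V ^ α := by
    rw [show (2 : ℝ) * α = α + α by ring, Real.rpow_add hV]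
  rw [ha]
  calc x ^ 2 * (V ^ α * Real.exp (-(α / 2) * x ^ 2) - 1) ^ 2 * Real.exp (-(1 / 2 : ℝ) * x ^ 2)
      = V ^ α * V ^ α * (x ^ 2 * (Real.exp (-(α / 2) * x ^ 2) *
          (Real.exp (-(α / 2) * x ^ 2) * Real.exp (-(1 / 2 : ℝ) * x ^ 2))))
        - 2 * V ^ α * (x ^ 2 * (Real.exp (-(α / 2) * x ^ 2) * Real.exp (-(1 / 2 : ℝ) * x ^ 2)))
        + x ^ 2 * Real.exp (-((1 : ℝ) / 2) * x ^ 2) := by ring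
    _ = _ := by rw [e2, e3]

lemma integrable_F (V : ℝ) (hV : 0 < V) {α : ℝ} (hα : 0 ≤ α) :
    Integrable (fun x : ℝ =>
      x ^ 2 * (V ^ α * Real.exp (-(α / 2) * x ^ 2) - 1) ^ 2 * Real.exp (-(1 / 2 : ℝ) * x ^ 2)) := by
  have h1 : (0 : ℝ) < 2 * α + 1 := by linarith
  have h2 : (0 : ℝ) < α + 1 := by linarith
  have := (((integrable_x2exp h1).const_mul (V ^ (2 * α))).sub
      ((integrable_x2exp h2).const_mul (2 * V ^ α))).add (integrable_x2exp one_pos)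
  refine this.congr ?_
  filter_upwards with x
  exact (expand_pt V hV α x).symm

lemma integral_F (V : ℝ) (hV : 0 < V) {α : ℝ} (hα : 0 ≤ α) :
    ∫ x : ℝ, x ^ 2 * (V ^ α * Real.exp (-(α / 2) * x ^ 2) - 1) ^ 2
        * Real.exp (-(1 / 2 : ℝ) * x ^ 2)
      = Real.sqrt (2 * π) * (V ^ (2 * α) / (2 * α + 1) ^ ((3 : ℝ) / 2)
          - 2 * V ^ α / (α + 1) ^ ((3 : ℝ) / 2) + 1) := by
  have h1 : (0 : ℝ) < 2 * α + 1 := by linarith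
  have h2 : (0 : ℝ) < α + 1 := by linarith
  have step : ∫ x : ℝ, x ^ 2 * (V ^ α * Real.exp (-(α / 2) * x ^ 2) - 1) ^ 2
      * Real.exp (-(1 / 2 : ℝ) * x ^ 2)
      = ∫ x : ℝ, (V ^ (2 * α) * (x ^ 2 * Real.exp (-((2 * α + 1) / 2) * x ^ 2))
        - 2 * V ^ α * (x ^ 2 * Real.exp (-((α + 1) / 2) * x ^ 2))
        + x ^ 2 * Real.exp (-((1 : ℝ) / 2) * x ^ 2)) := by
    apply integral_congr_ae
    filter_upwards with x
    exact expand_pt V hV α x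
  have hf : Integrable (fun x : ℝ => V ^ (2 * α) * (x ^ 2 * Real.exp (-((2 * α + 1) / 2) * x ^ 2))) :=
    (integrable_x2exp h1).const_mul _
  have hg : Integrable (fun x : ℝ => 2 * V ^ α * (x ^ 2 * Real.exp (-((α + 1) / 2) * x ^ 2))) :=
    (integrable_x2exp h2).const_mul _
  have hfg : Integrable (fun x : ℝ => V ^ (2 * α) * (x ^ 2 * Real.exp (-((2 * α + 1) / 2) * x ^ 2))
      - 2 * V ^ α * (x ^ 2 * Real.exp (-((α + 1) / 2) * x ^ 2))) := hf.sub hg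
  have hh : Integrable (fun x : ℝ => x ^ 2 * Real.exp (-((1 : ℝ) / 2) * x ^ 2)) :=
    integrable_x2exp one_pos
  rw [step, integral_add hfg hh, integral_sub hf hg,
    integral_const_mul, integral_const_mul, gauss_moment2 h1, gauss_moment2 h2,
    gauss_moment2 one_pos, Real.one_rpow]
  ring

/-- Pointwise monotonicity of the squared difference in the exponent. -/
lemma sq_mono (w : ℝ) {a b : ℝ} (ha : 0 ≤ a) (hab : a ≤ b) :
    (Real.exp (a * w) - 1) ^ 2 ≤ (Real.exp (b * w) - 1) ^ 2 := by
  rcases le_or_gt 0 w with hw | hw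
  · have h1 : 1 ≤ Real.exp (a * w) := Real.one_le_exp (by positivity)
    have h2 : Real.exp (a * w) ≤ Real.exp (b * w) := Real.exp_le_exp.2 (by nlinarith)
    nlinarith
  · have h2 : Real.exp (b * w) ≤ Real.exp (a * w) := Real.exp_le_exp.2 (by nlinarith)
    have h1 : Real.exp (a * w) ≤ 1 := Real.exp_le_one_iff.2 (by nlinarith)
    nlinarith [Real.exp_pos (b * w)]

lemma key_mono (V : ℝ) (hV : 0 < V) {a b : ℝ} (ha : 0 < a) (hab : a ≤ b) :
    V ^ (2 * a) / (2 * a + 1) ^ ((3 : ℝ) / 2) - 2 * V ^ a / (a + 1) ^ ((3 : ℝ) / 2) + 1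
      ≤ V ^ (2 * b) / (2 * b + 1) ^ ((3 : ℝ) / 2) - 2 * V ^ b / (b + 1) ^ ((3 : ℝ) / 2) + 1 := by
  have hb : 0 < b := lt_of_lt_of_le ha hab
  have hpt : ∀ x : ℝ,
      x ^ 2 * (V ^ a * Real.exp (-(a / 2) * x ^ 2) - 1) ^ 2 * Real.exp (-(1 / 2 : ℝ) * x ^ 2)
      ≤ x ^ 2 * (V ^ b * Real.exp (-(b / 2) * x ^ 2) - 1) ^ 2
          * Real.exp (-(1 / 2 : ℝ) * x ^ 2) := by
    intro x
    have hw : ∀ t : ℝ, V ^ t * Real.exp (-(t / 2) * x ^ 2)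
        = Real.exp (t * (Real.log V - x ^ 2 / 2)) := by
      intro t
      rw [Real.rpow_def_of_pos hV, ← Real.exp_add]
      congr 1; ring
    rw [hw a, hw b]
    have := sq_mono (Real.log V - x ^ 2 / 2) ha.le hab
    have hx2 : (0 : ℝ) ≤ x ^ 2 := sq_nonneg x
    have hexp : (0 : ℝ) ≤ Real.exp (-(1 / 2 : ℝ) * x ^ 2) := (Real.exp_pos _).le
    exact mul_le_mul_of_nonneg_right (mul_le_mul_of_nonneg_left this hx2) hexp
  have h := integral_mono (integrable_F V hV ha.le) (integrable_F V hV hb.le) hpt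
  rw [integral_F V hV ha.le, integral_F V hV hb.le] at h
  have hsq : 0 < Real.sqrt (2 * π) := Real.sqrt_pos.2 (by positivity)
  exact (mul_le_mul_iff_right₀ hsq).1 h

/-- The excess MSE `G(α) = (D²/B){V^{2α}/(2α+1)^{3/2} − 2V^α/(α+1)^{3/2} + 1}`
of the robust Bayes estimator is monotone increasing on `(0,1)` and tends to `0`
as `α → 0⁺`. -/
theorem excess_mse_monotone_and_vanishes
    (A D : ℝ) (hA : 0 < A) (hD : 0 < D)
    (B V : ℝ) (hB : B = A + D) (hV : V = (2 * π * B) ^ (-(1/2) : ℝ))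
    (G : ℝ → ℝ)
    (hG : ∀ α : ℝ, G α = (D ^ 2 / B) * (V ^ (2 * α) / (2 * α + 1) ^ ((3 : ℝ)/2)
        - 2 * V ^ α / (α + 1) ^ ((3 : ℝ)/2) + 1)) :
    (∀ α₁ α₂ : ℝ, 0 < α₁ → α₁ ≤ α₂ → α₂ < 1 → G α₁ ≤ G α₂) ∧
    Tendsto G (𝓝[>] 0) (𝓝 0) := by
  have hBpos : 0 < B := by rw [hB]; linarith
  have hVpos : 0 < V := by
    rw [hV]; exact Real.rpow_pos_of_pos (by positivity) _
  constructor
  · intro α₁ α₂ h1 h12 _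
    rw [hG α₁, hG α₂]
    exact mul_le_mul_of_nonneg_left (key_mono V hVpos h1 h12) (by positivity)
  · have hGeq : G = fun α : ℝ => (D ^ 2 / B) * (V ^ (2 * α) / (2 * α + 1) ^ ((3 : ℝ)/2)
        - 2 * V ^ α / (α + 1) ^ ((3 : ℝ)/2) + 1) := funext hG
    rw [hGeq]
    have hVc : Continuous (fun α : ℝ => V ^ α) := by
      have : (fun α : ℝ => V ^ α) = fun α : ℝ => Real.exp (Real.log V * α) :=
        funext fun α => Real.rpow_def_of_pos hVpos α
      rw [this]
      exact Real.continuous_exp.comp (continuous_const.mul continuous_id)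
    have hden1 : ContinuousAt (fun α : ℝ => (2 * α + 1) ^ ((3 : ℝ)/2)) 0 := by
      have hi : ContinuousAt (fun α : ℝ => 2 * α + 1) 0 :=
        ((continuous_const.mul continuous_id).add continuous_const).continuousAt
      have h2 : ContinuousAt (fun y : ℝ => y ^ ((3 : ℝ)/2)) ((2 : ℝ) * 0 + 1) := by
        rw [show (2 : ℝ) * 0 + 1 = 1 by norm_num]
        exact Real.continuousAt_rpow_const 1 _ (Or.inl one_ne_zero)
      exact ContinuousAt.comp (g := fun y : ℝ => y ^ ((3 : ℝ)/2)) (f := fun α : ℝ => 2 * α + 1) h2 hi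
    have hden2 : ContinuousAt (fun α : ℝ => (α + 1) ^ ((3 : ℝ)/2)) 0 := by
      have hi : ContinuousAt (fun α : ℝ => α + 1) 0 :=
        (continuous_id.add continuous_const).continuousAt
      have h2 : ContinuousAt (fun y : ℝ => y ^ ((3 : ℝ)/2)) ((0 : ℝ) + 1) := by
        rw [show (0 : ℝ) + 1 = 1 by norm_num]
        exact Real.continuousAt_rpow_const 1 _ (Or.inl one_ne_zero)
      exact ContinuousAt.comp (g := fun y : ℝ => y ^ ((3 : ℝ)/2)) (f := fun α : ℝ => α + 1) h2 hi
    have hnum1 : ContinuousAt (fun α : ℝ => V ^ (2 * α)) 0 :=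
      (hVc.comp (continuous_const.mul continuous_id)).continuousAt
    have hnum2 : ContinuousAt (fun α : ℝ => 2 * V ^ α) 0 :=
      (continuous_const.mul hVc).continuousAt
    have hd1 : ((fun α : ℝ => (2 * α + 1) ^ ((3 : ℝ)/2)) 0) ≠ 0 := by
      show ((2 : ℝ) * 0 + 1) ^ ((3 : ℝ)/2) ≠ 0
      rw [show (2 : ℝ) * 0 + 1 = 1 by norm_num, Real.one_rpow]
      norm_num
    have hd2 : ((fun α : ℝ => (α + 1) ^ ((3 : ℝ)/2)) 0) ≠ 0 := by
      show ((0 : ℝ) + 1) ^ ((3 : ℝ)/2) ≠ 0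
      rw [show (0 : ℝ) + 1 = 1 by norm_num, Real.one_rpow]
      norm_num
    have hcont : ContinuousAt (fun α : ℝ => (D ^ 2 / B) * (V ^ (2 * α) / (2 * α + 1) ^ ((3 : ℝ)/2)
        - 2 * V ^ α / (α + 1) ^ ((3 : ℝ)/2) + 1)) 0 :=
      continuousAt_const.mul (((hnum1.div hden1 hd1).sub (hnum2.div hden2 hd2)).add
        continuousAt_const)
    have ht := hcont.tendsto.mono_left (nhdsWithin_le_nhds (s := Set.Ioi (0:ℝ)))
    convert ht using 2
    norm_num
end

section
/- For y ~ N(μ, B), E[(y − μ)² (1 − s(y))²] = B { 1 − 2V^α/(α+1)^{3/2} + V^{2α}/(2α+1)^{3/2} }. Consequently (D²/B²) E[(y − μ)²(1 − s(y))²] equals the excess MSE term g₂ = (D²/B){ V^{2α}/(2α+1)^{3/2} − 2V^α/(α+1)^{3/2} + 1 }. -/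
open MeasureTheory Real

lemma sqint_integrable {c : ℝ} (hc : 0 < c) :
    Integrable fun x : ℝ => x ^ 2 * Real.exp (-c * x ^ 2) := by
  have := integrable_rpow_mul_exp_neg_mul_sq hc (s := 2) (by norm_num)
  refine this.congr ?_
  filter_upwards with x
  rw [show ((2:ℝ)) = ((2:ℕ):ℝ) by norm_num, Real.rpow_natCast]

lemma sqint_value {c : ℝ} (hc : 0 < c) :
    ∫ x : ℝ, x ^ 2 * Real.exp (-c * x ^ 2)
      = Real.sqrt π / 2 * c ^ (-(3:ℝ)/2) := by
  have hIoi : ∫ x in Set.Ioi (0:ℝ), x ^ 2 * Real.exp (-c * x ^ 2)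
      = Real.sqrt π / 4 * c ^ (-(3:ℝ)/2) := by
    have h := integral_rpow_mul_exp_neg_mul_rpow (p := 2) (q := 2) (b := c)
      (by norm_num) (by norm_num) hc
    have hcong : ∫ x in Set.Ioi (0:ℝ), x ^ 2 * Real.exp (-c * x ^ 2)
        = ∫ x in Set.Ioi (0:ℝ), x ^ (2:ℝ) * Real.exp (-c * x ^ (2:ℝ)) := by
      refine setIntegral_congr_fun measurableSet_Ioi (fun x hx => ?_)
      rw [show ((2:ℝ)) = ((2:ℕ):ℝ) by norm_num, Real.rpow_natCast]
    rw [hcong, h]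
    have hG : Real.Gamma ((2+1)/2) = Real.sqrt π / 2 := by
      have : ((2:ℝ)+1)/2 = 1/2 + 1 := by norm_num
      rw [this, Real.Gamma_add_one (by norm_num), Real.Gamma_one_half_eq]
      ring
    rw [hG]
    ring_nf
  have hev : ∀ x : ℝ, (-x) ^ 2 * Real.exp (-c * (-x) ^ 2)
      = x ^ 2 * Real.exp (-c * x ^ 2) := by intro x; ring_nf
  have hIic : ∫ x in Set.Iic (0:ℝ), x ^ 2 * Real.exp (-c * x ^ 2)
      = ∫ x in Set.Ioi (0:ℝ), x ^ 2 * Real.exp (-c * x ^ 2) := by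
    rw [← neg_zero, ← integral_comp_neg_Iic]
    simp_rw [neg_zero, hev]
  have hInt := sqint_integrable hc
  rw [← intervalIntegral.integral_Iic_add_Ioi (b := (0:ℝ)) hInt.integrableOn hInt.integrableOn,
    hIic, hIoi]
  ring

lemma Vmul_value {B t : ℝ} (hB : 0 < B) (ht : 0 < t) :
    (2 * π * B) ^ (-(1/2) : ℝ) * (Real.sqrt π / 2 * (t / (2 * B)) ^ (-(3:ℝ)/2))
      = B / t ^ ((3:ℝ)/2) := by
  have hπ : (0:ℝ) < π := pi_pos
  have h2B : (0:ℝ) < 2 * B := by linarith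
  have h1 : (2 * π * B) ^ (-(1/2) : ℝ) = (π ^ ((1:ℝ)/2) * (2*B) ^ ((1:ℝ)/2))⁻¹ := by
    rw [show (2*π*B) = π*(2*B) by ring, Real.rpow_neg (by positivity),
      Real.mul_rpow hπ.le h2B.le]
  have h2 : (t / (2*B)) ^ (-(3:ℝ)/2) = (2*B) ^ ((3:ℝ)/2) / t ^ ((3:ℝ)/2) := by
    rw [show (-(3:ℝ)/2) = -((3:ℝ)/2) by norm_num, Real.rpow_neg (by positivity),
      Real.div_rpow ht.le h2B.le, inv_div]
  have h3 : Real.sqrt π = π ^ ((1:ℝ)/2) := Real.sqrt_eq_rpow π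
  rw [h1, h2, h3]
  have e2 : (2*B) ^ ((3:ℝ)/2) = (2*B) ^ ((1:ℝ)/2) * (2*B) := by
    rw [show ((3:ℝ)/2) = (1:ℝ)/2 + 1 by norm_num, Real.rpow_add h2B, Real.rpow_one]
  rw [e2]
  have p1 : (0:ℝ) < π ^ ((1:ℝ)/2) := by positivity
  have p2 : (0:ℝ) < (2*B) ^ ((1:ℝ)/2) := by positivity
  have p3 : (0:ℝ) < t ^ ((3:ℝ)/2) := by positivity
  field_simp

/-- For `y ~ N(μ, B)`,
`E[(y − μ)²(1 − s(y))²] = B{1 − 2V^α/(α+1)^{3/2} + V^{2α}/(2α+1)^{3/2}}`,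
and consequently `(D²/B²) E[(y − μ)²(1 − s(y))²]` equals the excess MSE
`g₂ = (D²/B){V^{2α}/(2α+1)^{3/2} − 2V^α/(α+1)^{3/2} + 1}`. -/
theorem excess_mse_expectation
    (μ B D α : ℝ) (hB : 0 < B) (hD : 0 < D) (hα : 0 < α)
    (V : ℝ) (hV : V = (2 * π * B) ^ (-(1/2) : ℝ))
    (f s : ℝ → ℝ)
    (hf : ∀ y, f y = V * Real.exp (-(y - μ) ^ 2 / (2 * B)))
    (hs : ∀ y, s y = V ^ α * Real.exp (-α * (y - μ) ^ 2 / (2 * B))) :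
    (∫ y : ℝ, f y * ((y - μ) ^ 2 * (1 - s y) ^ 2))
      = B * (1 - 2 * V ^ α / (α + 1) ^ ((3 : ℝ)/2)
          + V ^ (2 * α) / (2 * α + 1) ^ ((3 : ℝ)/2)) ∧
    (D ^ 2 / B ^ 2) * ∫ y : ℝ, f y * ((y - μ) ^ 2 * (1 - s y) ^ 2)
      = (D ^ 2 / B) * (V ^ (2 * α) / (2 * α + 1) ^ ((3 : ℝ)/2)
          - 2 * V ^ α / (α + 1) ^ ((3 : ℝ)/2) + 1) := by
  have hVpos : 0 < V := by rw [hV]; positivity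
  set G : ℝ → ℝ := fun x =>
      V * (x ^ 2 * Real.exp (-(1 / (2*B)) * x ^ 2))
      - 2 * V ^ α * V * (x ^ 2 * Real.exp (-((α+1) / (2*B)) * x ^ 2))
      + V ^ (2*α) * V * (x ^ 2 * Real.exp (-((2*α+1) / (2*B)) * x ^ 2)) with hG
  have key : ∀ y : ℝ, f y * ((y - μ) ^ 2 * (1 - s y) ^ 2) = G (y - μ) := by
    intro y
    rw [hf, hs]
    simp only [hG]
    set x := y - μ with hx
    have h1 : -x ^ 2 / (2*B) = -(1 / (2*B)) * x ^ 2 := by ring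
    have h2 : -α * x ^ 2 / (2*B) = -(α / (2*B)) * x ^ 2 := by ring
    rw [h1, h2]
    have h3 : Real.exp (-((α+1) / (2*B)) * x ^ 2)
        = Real.exp (-(1 / (2*B)) * x ^ 2) * Real.exp (-(α / (2*B)) * x ^ 2) := by
      rw [← Real.exp_add]; ring_nf
    have h4 : Real.exp (-((2*α+1) / (2*B)) * x ^ 2)
        = Real.exp (-(1 / (2*B)) * x ^ 2) * Real.exp (-(α / (2*B)) * x ^ 2) ^ 2 := by
      rw [pow_two (Real.exp (-(α / (2*B)) * x ^ 2)), ← Real.exp_add, ← Real.exp_add]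
      ring_nf
    have h5 : V ^ (2*α) = (V ^ α) ^ 2 := by
      rw [← Real.rpow_natCast (V ^ α) 2, ← Real.rpow_mul hVpos.le]
      norm_num [mul_comm]
    rw [h3, h4, h5]
    ring
  have hint : ∀ t : ℝ, 0 < t →
      Integrable (fun x : ℝ => x ^ 2 * Real.exp (-(t / (2*B)) * x ^ 2)) :=
    fun t ht => sqint_integrable (by positivity)
  have hval : ∀ t : ℝ, 0 < t →
      V * ∫ x : ℝ, x ^ 2 * Real.exp (-(t / (2*B)) * x ^ 2) = B / t ^ ((3:ℝ)/2) := by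
    intro t ht
    rw [sqint_value (by positivity : (0:ℝ) < t / (2*B)), ← mul_assoc]
    rw [hV]
    rw [mul_assoc]
    exact Vmul_value hB ht
  have hα1 : (0:ℝ) < α + 1 := by linarith
  have h2α1 : (0:ℝ) < 2*α + 1 := by linarith
  have i1 := hint 1 one_pos
  have i2 := hint (α+1) hα1
  have i3 := hint (2*α+1) h2α1
  have ia : Integrable (fun x : ℝ =>
      V * (x ^ 2 * Real.exp (-(1 / (2*B)) * x ^ 2))
      - 2 * V ^ α * V * (x ^ 2 * Real.exp (-((α+1) / (2*B)) * x ^ 2))) := by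
    have := (i1.const_mul V).sub (i2.const_mul (2 * V ^ α * V))
    exact this
  have ib : Integrable (fun x : ℝ => V * (x ^ 2 * Real.exp (-(1 / (2*B)) * x ^ 2))) :=
    i1.const_mul V
  have ib2 : Integrable (fun x : ℝ =>
      2 * V ^ α * V * (x ^ 2 * Real.exp (-((α+1) / (2*B)) * x ^ 2))) :=
    i2.const_mul (2 * V ^ α * V)
  have ic : Integrable (fun x : ℝ =>
      V ^ (2*α) * V * (x ^ 2 * Real.exp (-((2*α+1) / (2*B)) * x ^ 2))) :=
    i3.const_mul (V ^ (2*α) * V)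
  have hIG : (∫ y : ℝ, f y * ((y - μ) ^ 2 * (1 - s y) ^ 2))
      = B - 2 * V ^ α * (B / (α+1) ^ ((3:ℝ)/2))
        + V ^ (2*α) * (B / (2*α+1) ^ ((3:ℝ)/2)) := by
    have h0 : (∫ y : ℝ, f y * ((y - μ) ^ 2 * (1 - s y) ^ 2)) = ∫ x : ℝ, G x := by
      simp_rw [key]
      exact integral_sub_right_eq_self G μ
    rw [h0]
    simp only [hG]
    rw [integral_add ia ic, integral_sub ib ib2,
      integral_const_mul, integral_const_mul, integral_const_mul]
    have v1 := hval 1 one_pos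
    have v2 := hval (α+1) hα1
    have v3 := hval (2*α+1) h2α1
    have w1 : V * ∫ x : ℝ, x ^ 2 * Real.exp (-(1 / (2*B)) * x ^ 2) = B := by
      have := v1
      simp only [Real.one_rpow] at this
      simpa using this
    calc V * (∫ x : ℝ, x ^ 2 * Real.exp (-(1 / (2*B)) * x ^ 2))
          - 2 * V ^ α * V * (∫ x : ℝ, x ^ 2 * Real.exp (-((α+1) / (2*B)) * x ^ 2))
          + V ^ (2*α) * V * (∫ x : ℝ, x ^ 2 * Real.exp (-((2*α+1) / (2*B)) * x ^ 2))
        = (V * ∫ x : ℝ, x ^ 2 * Real.exp (-(1 / (2*B)) * x ^ 2))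
          - 2 * V ^ α * (V * ∫ x : ℝ, x ^ 2 * Real.exp (-((α+1) / (2*B)) * x ^ 2))
          + V ^ (2*α) * (V * ∫ x : ℝ, x ^ 2 * Real.exp (-((2*α+1) / (2*B)) * x ^ 2)) := by
          ring
      _ = B - 2 * V ^ α * (B / (α+1) ^ ((3:ℝ)/2))
          + V ^ (2*α) * (B / (2*α+1) ^ ((3:ℝ)/2)) := by rw [w1, v2, v3]
  constructor
  · rw [hIG]; ring
  · rw [hIG]
    have hBne : (B:ℝ) ≠ 0 := ne_of_gt hB
    field_simp
    ring
end

section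
/- For y ~ N(μ, B), E[ ( D s(y)(y − μ) / (2B³) )² ( α(y − μ)² − (2 − α)B )² ] = D² V^{2α} (α⁴ − α²/2 + 1) / ( B³ (2α+1)^{7/2} ). -/
open MeasureTheory Real

lemma g4_aux_gamma32 : Real.Gamma (3/2) = Real.sqrt π / 2 := by
  rw [show (3/2 : ℝ) = 1/2 + 1 by norm_num, Real.Gamma_add_one (by norm_num),
    Real.Gamma_one_half_eq]
  ring

lemma g4_aux_gamma52 : Real.Gamma (5/2) = 3 * Real.sqrt π / 4 := by
  rw [show (5/2 : ℝ) = 3/2 + 1 by norm_num, Real.Gamma_add_one (by norm_num),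
    g4_aux_gamma32]
  ring

lemma g4_aux_gamma72 : Real.Gamma (7/2) = 15 * Real.sqrt π / 8 := by
  rw [show (7/2 : ℝ) = 5/2 + 1 by norm_num, Real.Gamma_add_one (by norm_num),
    g4_aux_gamma52]
  ring

lemma g4_aux_moment {b : ℝ} (hb : 0 < b) (q r : ℝ) (hq : -1 < q) (hr : r = (q+1)/2) :
    ∫ x in Set.Ioi (0:ℝ), x ^ q * Real.exp (-b * x ^ 2)
      = b ^ (-r) * (1/2) * Real.Gamma r := by
  have h := integral_rpow_mul_exp_neg_mul_rpow (p := 2) (q := q) two_pos hq hb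
  have h2 : ∫ x in Set.Ioi (0:ℝ), x ^ q * Real.exp (-b * x ^ 2)
      = ∫ x in Set.Ioi (0:ℝ), x ^ q * Real.exp (-b * x ^ (2:ℝ)) := by
    refine setIntegral_congr_fun measurableSet_Ioi fun x hx => ?_
    rw [Real.rpow_two]
  rw [h2, h, hr]
  congr 2
  ring

/-- For `y ~ N(μ, B)`:
`E[(D s(y)(y−μ)/(2B³))² (α(y−μ)² − (2−α)B)²]
  = D² V^{2α}(α⁴ − α²/2 + 1)/(B³(2α+1)^{7/2})`. -/
theorem g4_ingredient_expectation
    (μ B D α : ℝ) (hB : 0 < B) (hD : 0 < D) (hα : 0 < α)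
    (V : ℝ) (hV : V = (2 * π * B) ^ (-(1/2) : ℝ))
    (f s : ℝ → ℝ)
    (hf : ∀ y, f y = V * Real.exp (-(y - μ) ^ 2 / (2 * B)))
    (hs : ∀ y, s y = V ^ α * Real.exp (-α * (y - μ) ^ 2 / (2 * B))) :
    ∫ y : ℝ, f y * ((D * s y * (y - μ) / (2 * B ^ 3)) ^ 2
        * (α * (y - μ) ^ 2 - (2 - α) * B) ^ 2)
      = D ^ 2 * V ^ (2 * α) * (α ^ 4 - α ^ 2 / 2 + 1)
          / (B ^ 3 * (2 * α + 1) ^ ((7 : ℝ)/2)) := by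
  have hπ : (0:ℝ) < π := Real.pi_pos
  have hVpos : 0 < V := by rw [hV]; positivity
  set c : ℝ := (2*α+1)/(2*B) with hcdef
  have hc : 0 < c := by rw [hcdef]; positivity
  set C : ℝ := V ^ (2*α) * V * (D^2/(4*B^6)) with hC
  -- pointwise identity
  have key : ∀ y : ℝ, f y * ((D * s y * (y - μ) / (2 * B ^ 3)) ^ 2
        * (α * (y - μ) ^ 2 - (2 - α) * B) ^ 2)
      = C * ((y-μ)^2 * (α*(y-μ)^2 - (2-α)*B)^2) * Real.exp (-c*(y-μ)^2) := by
    intro y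
    have e1 : Real.exp (-(y-μ)^2/(2*B)) * (Real.exp (-α*(y-μ)^2/(2*B)))^2
        = Real.exp (-c*(y-μ)^2) := by
      have esq : (Real.exp (-α*(y-μ)^2/(2*B)))^2
          = Real.exp (-α*(y-μ)^2/(2*B) + -α*(y-μ)^2/(2*B)) := by
        rw [Real.exp_add]; ring
      rw [esq, ← Real.exp_add]
      congr 1
      rw [hcdef]
      field_simp
      ring
    have e2 : (V ^ α)^2 = V ^ (2*α) := by
      rw [sq, ← Real.rpow_add hVpos]
      ring_nf
    rw [hf, hs, hC, ← e1, ← e2]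
    ring
  have h1 : (∫ y : ℝ, f y * ((D * s y * (y - μ) / (2 * B ^ 3)) ^ 2
        * (α * (y - μ) ^ 2 - (2 - α) * B) ^ 2))
      = ∫ t : ℝ, C * (t^2 * (α*t^2 - (2-α)*B)^2) * Real.exp (-c*t^2) := by
    simp_rw [key]
    exact integral_sub_right_eq_self
      (fun t => C * (t^2 * (α*t^2 - (2-α)*B)^2) * Real.exp (-c*t^2)) μ
  rw [h1]
  have h2 : (∫ t : ℝ, C * (t^2 * (α*t^2 - (2-α)*B)^2) * Real.exp (-c*t^2))
      = 2 * ∫ t in Set.Ioi (0:ℝ), C * (t^2 * (α*t^2 - (2-α)*B)^2) * Real.exp (-c*t^2) := by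
    rw [← integral_comp_abs
      (f := fun t => C * (t^2 * (α*t^2 - (2-α)*B)^2) * Real.exp (-c*t^2))]
    simp_rw [sq_abs]
  rw [h2]
  have i6 : IntegrableOn (fun t : ℝ => t ^ (6:ℝ) * Real.exp (-c*t^2)) (Set.Ioi 0) :=
    integrableOn_rpow_mul_exp_neg_mul_sq hc (by norm_num)
  have i4 : IntegrableOn (fun t : ℝ => t ^ (4:ℝ) * Real.exp (-c*t^2)) (Set.Ioi 0) :=
    integrableOn_rpow_mul_exp_neg_mul_sq hc (by norm_num)
  have i2 : IntegrableOn (fun t : ℝ => t ^ (2:ℝ) * Real.exp (-c*t^2)) (Set.Ioi 0) :=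
    integrableOn_rpow_mul_exp_neg_mul_sq hc (by norm_num)
  have h3 : (∫ t in Set.Ioi (0:ℝ), C * (t^2 * (α*t^2 - (2-α)*B)^2) * Real.exp (-c*t^2))
      = C*α^2 * (∫ t in Set.Ioi (0:ℝ), t ^ (6:ℝ) * Real.exp (-c*t^2))
        + (-(2*α*(2-α)*B*C)) * (∫ t in Set.Ioi (0:ℝ), t ^ (4:ℝ) * Real.exp (-c*t^2))
        + C*(2-α)^2*B^2 * (∫ t in Set.Ioi (0:ℝ), t ^ (2:ℝ) * Real.exp (-c*t^2)) := by
    have step : (∫ t in Set.Ioi (0:ℝ), C * (t^2 * (α*t^2 - (2-α)*B)^2) * Real.exp (-c*t^2))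
        = ∫ t in Set.Ioi (0:ℝ),
            (C*α^2 * (t ^ (6:ℝ) * Real.exp (-c*t^2))
              + (-(2*α*(2-α)*B*C)) * (t ^ (4:ℝ) * Real.exp (-c*t^2))
              + C*(2-α)^2*B^2 * (t ^ (2:ℝ) * Real.exp (-c*t^2))) := by
      refine setIntegral_congr_fun measurableSet_Ioi fun t ht => ?_
      rw [show t ^ (6:ℝ) = t^6 by
            rw [show (6:ℝ) = ((6:ℕ):ℝ) by norm_num, Real.rpow_natCast],
          show t ^ (4:ℝ) = t^4 by
            rw [show (4:ℝ) = ((4:ℕ):ℝ) by norm_num, Real.rpow_natCast],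
          Real.rpow_two]
      ring
    have iA : IntegrableOn (fun t : ℝ =>
        C*α^2 * (t ^ (6:ℝ) * Real.exp (-c*t^2))
          + (-(2*α*(2-α)*B*C)) * (t ^ (4:ℝ) * Real.exp (-c*t^2))) (Set.Ioi 0) :=
      (i6.const_mul _).add (i4.const_mul _)
    rw [step, integral_add iA (i2.const_mul _),
      integral_add (i6.const_mul _) (i4.const_mul _),
      integral_const_mul, integral_const_mul, integral_const_mul]
  rw [h3,
    g4_aux_moment hc 6 ((7:ℝ)/2) (by norm_num) (by norm_num),
    g4_aux_moment hc 4 ((5:ℝ)/2) (by norm_num) (by norm_num),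
    g4_aux_moment hc 2 ((3:ℝ)/2) (by norm_num) (by norm_num),
    g4_aux_gamma72, g4_aux_gamma52, g4_aux_gamma32]
  have hT : (0:ℝ) < 2*B := by linarith
  have hP : (0:ℝ) < 2*α+1 := by linarith
  have hgen : ∀ r : ℝ, c ^ (-r) = (2*B) ^ r / (2*α+1) ^ r := by
    intro r
    rw [hcdef, Real.rpow_neg (by positivity), Real.div_rpow hP.le hT.le, inv_div]
  simp only [hgen]
  set a : ℝ := (2*α+1) ^ ((1:ℝ)/2) with ha
  set b' : ℝ := (2*B) ^ ((1:ℝ)/2) with hb'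
  set sp : ℝ := π ^ ((1:ℝ)/2) with hsp
  have ha0 : 0 < a := by rw [ha]; positivity
  have hb0 : 0 < b' := by rw [hb']; positivity
  have hsp0 : 0 < sp := by rw [hsp]; positivity
  have hodd : ∀ (x : ℝ), 0 < x → ∀ n : ℕ, x ^ (((2*n+1 : ℕ) : ℝ)/2) = x ^ n * x ^ ((1:ℝ)/2) := by
    intro x hx n
    rw [show (((2*n+1 : ℕ) : ℝ)/2) = (n : ℝ) + 1/2 by push_cast; ring,
      Real.rpow_add hx, Real.rpow_natCast]
  have r7P : (2*α+1) ^ ((7:ℝ)/2) = (2*α+1)^3 * a := by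
    rw [ha, show ((7:ℝ)/2) = ((2*3+1 : ℕ) : ℝ)/2 by norm_num]; exact hodd _ hP 3
  have r5P : (2*α+1) ^ ((5:ℝ)/2) = (2*α+1)^2 * a := by
    rw [ha, show ((5:ℝ)/2) = ((2*2+1 : ℕ) : ℝ)/2 by norm_num]; exact hodd _ hP 2
  have r3P : (2*α+1) ^ ((3:ℝ)/2) = (2*α+1)^1 * a := by
    rw [ha, show ((3:ℝ)/2) = ((2*1+1 : ℕ) : ℝ)/2 by norm_num]; exact hodd _ hP 1
  have r7T : (2*B) ^ ((7:ℝ)/2) = (2*B)^3 * b' := by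
    rw [hb', show ((7:ℝ)/2) = ((2*3+1 : ℕ) : ℝ)/2 by norm_num]; exact hodd _ hT 3
  have r5T : (2*B) ^ ((5:ℝ)/2) = (2*B)^2 * b' := by
    rw [hb', show ((5:ℝ)/2) = ((2*2+1 : ℕ) : ℝ)/2 by norm_num]; exact hodd _ hT 2
  have r3T : (2*B) ^ ((3:ℝ)/2) = (2*B)^1 * b' := by
    rw [hb', show ((3:ℝ)/2) = ((2*1+1 : ℕ) : ℝ)/2 by norm_num]; exact hodd _ hT 1
  have hsqrtpi : Real.sqrt π = sp := by rw [hsp, Real.sqrt_eq_rpow]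
  have hVval : V = 1/(b' * sp) := by
    rw [hV, hb', hsp, show 2*π*B = (2*B)*π by ring,
      Real.mul_rpow hT.le hπ.le]
    rw [Real.rpow_neg hT.le, Real.rpow_neg hπ.le]
    rw [eq_div_iff (by positivity)]
    field_simp
  rw [r7P, r5P, r3P, r7T, r5T, r3T, hsqrtpi, hC, hVval]
  field_simp
  ring
end

section
/- The robust Bayes estimator of Ghosh et al. is not tail robust: with Huber's function ψ_K(u) = u·min(1, K/|u|) for K > 0, and θ̃^G(y) = y − (D√v/(A+D)) ψ_K((y − m̂)/√v) for fixed m̂ ∈ ℝ and v > 0, one has lim_{y→+∞} (y − θ̃^G(y)) = K D √v /(A+D) and lim_{y→−∞} (y − θ̃^G(y)) = −K D √v /(A+D); in particular |θ̃^G(y) − y| → K D √v/(A+D) ≠ 0 as |y| → ∞. -/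
open Real Filter Topology

/-- The robust Bayes estimator of Ghosh et al. (2008) is not tail robust:
`y − θ̃^G(y) → K D √v/(A+D)` as `y → +∞` and `→ −K D √v/(A+D)` as `y → −∞`,
and this limit is nonzero. -/
theorem ghosh_estimator_not_tail_robust
    (A D K v mhat : ℝ) (hA : 0 < A) (hD : 0 < D) (hK : 0 < K) (hv : 0 < v)
    (ψ : ℝ → ℝ) (hψ : ∀ u, ψ u = u * min 1 (K / |u|))
    (θG : ℝ → ℝ)
    (hθG : ∀ y, θG y = y - (D * Real.sqrt v / (A + D)) * ψ ((y - mhat) / Real.sqrt v)) :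
    Tendsto (fun y => y - θG y) atTop (𝓝 (K * D * Real.sqrt v / (A + D))) ∧
    Tendsto (fun y => y - θG y) atBot (𝓝 (-(K * D * Real.sqrt v / (A + D)))) ∧
    Tendsto (fun y => |θG y - y|) atTop (𝓝 (K * D * Real.sqrt v / (A + D))) ∧
    Tendsto (fun y => |θG y - y|) atBot (𝓝 (K * D * Real.sqrt v / (A + D))) ∧
    K * D * Real.sqrt v / (A + D) ≠ 0 := by
  have hs : 0 < Real.sqrt v := Real.sqrt_pos.mpr hv
  have hAD : 0 < A + D := by linarith
  set c : ℝ := K * D * Real.sqrt v / (A + D) with hc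
  have hcpos : 0 < c := by positivity
  -- eventually at top
  have htop : ∀ᶠ y in atTop, y - θG y = c := by
    filter_upwards [eventually_ge_atTop (mhat + K * Real.sqrt v)] with y hy
    have hu : K ≤ (y - mhat) / Real.sqrt v := by
      rw [le_div_iff₀ hs]; linarith
    have hu0 : 0 < (y - mhat) / Real.sqrt v := lt_of_lt_of_le hK hu
    have hψy : ψ ((y - mhat) / Real.sqrt v) = K := by
      rw [hψ, abs_of_pos hu0, min_eq_right (by rw [div_le_one hu0]; exact hu),
        mul_div_cancel₀ _ (ne_of_gt hu0)]
    rw [hθG, hψy]; ring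
  have hbot : ∀ᶠ y in atBot, y - θG y = -c := by
    filter_upwards [eventually_le_atBot (mhat - K * Real.sqrt v)] with y hy
    have hu : (y - mhat) / Real.sqrt v ≤ -K := by
      rw [div_le_iff₀ hs]; linarith
    have hu0 : (y - mhat) / Real.sqrt v < 0 := lt_of_le_of_lt hu (by linarith)
    have hψy : ψ ((y - mhat) / Real.sqrt v) = -K := by
      rw [hψ, abs_of_neg hu0, min_eq_right]
      · have hne : (y - mhat) / Real.sqrt v ≠ 0 := ne_of_lt hu0
        have hmy : mhat - y ≠ 0 := by nlinarith [mul_pos hK hs]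
        have hym : y - mhat ≠ 0 := fun h => hmy (by linarith)
        field_simp
      · rw [div_le_one (by linarith)]; linarith
    rw [hθG, hψy]; ring
  refine ⟨Tendsto.congr' (by filter_upwards [htop] with y h; exact h.symm) tendsto_const_nhds,
    Tendsto.congr' (by filter_upwards [hbot] with y h; exact h.symm) tendsto_const_nhds,
    ?_, ?_, ne_of_gt hcpos⟩
  · refine Tendsto.congr' ?_ tendsto_const_nhds
    filter_upwards [htop] with y hy
    rw [abs_sub_comm, hy, abs_of_pos hcpos]
  · refine Tendsto.congr' ?_ tendsto_const_nhds
    filter_upwards [hbot] with y hy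
    rw [abs_sub_comm, hy, abs_neg, abs_of_pos hcpos]
end
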